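/- Sharpness of the Bipartite Degeneracy Lemma: Let d be a nonnegative integer and n an integer with n ≥ 2d. The complete bipartite graph K_{d, n−d} (on the vertex type Fin d ⊕ Fin (n−d), where a left vertex and a right vertex are always adjacent and no two vertices on the same side are adjacent) is d-degenerate and has exactly d(n − d) edges. -/
import Mathlib


open Finset

open scoped Classical in
/-- A simple graph is `d`-degenerate if every nonempty finite set `S` of vertices contains a
vertex with at most `d` neighbors inside `S`. -/
def IsDegenerate {V : Type*} (G : SimpleGraph V) (d : ℕ) : Prop :=
  ∀ S : Finset V, S.Nonempty → ∃ v ∈ S, (S.filter (fun u => G.Adj v u)).card ≤ d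

open scoped Classical in
/-- **Sharpness of the Bipartite Degeneracy Lemma.** For `n ≥ 2d`, the complete bipartite
graph `K_{d, n-d}` is `d`-degenerate and has exactly `d (n - d)` edges. -/
theorem completeBipartite_degenerate_sharp (d n : ℕ) (hn : 2 * d ≤ n) :
    IsDegenerate (completeBipartiteGraph (Fin d) (Fin (n - d))) d ∧
      (completeBipartiteGraph (Fin d) (Fin (n - d))).edgeFinset.card = d * (n - d) := by
  set m := n - d with hm
  constructor
  · intro S hS
    by_cases h : ∃ v ∈ S, (Sum.isRight v : Prop)
    · obtain ⟨v, hv, hr⟩ := h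
      refine ⟨v, hv, ?_⟩
      calc (S.filter (fun u => (completeBipartiteGraph (Fin d) (Fin m)).Adj v u)).card
          ≤ ((univ : Finset (Fin d)).image Sum.inl).card := by
            apply Finset.card_le_card
            intro u hu
            simp only [mem_filter, completeBipartiteGraph_adj] at hu
            rcases hu.2 with ⟨hl, _⟩ | ⟨_, hl⟩
            · simp [Sum.isRight_iff] at hr; obtain ⟨b, rfl⟩ := hr; simp at hl
            · rw [Sum.isLeft_iff] at hl; obtain ⟨a, rfl⟩ := hl; simp
        _ ≤ d := by
            rw [Finset.card_image_of_injective _ Sum.inl_injective]; simp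
    · obtain ⟨v, hv⟩ := hS
      refine ⟨v, hv, ?_⟩
      have : S.filter (fun u => (completeBipartiteGraph (Fin d) (Fin m)).Adj v u) = ∅ := by
        apply Finset.filter_eq_empty_iff.mpr
        intro u hu
        simp only [completeBipartiteGraph_adj]
        push_neg at h
        have h1 := h u hu
        have h2 := h v hv
        rintro (⟨_, hr⟩ | ⟨hr, _⟩)
        · exact h1 hr
        · exact h2 hr
      rw [this]; simp
  · have key : ∑ v, (completeBipartiteGraph (Fin d) (Fin m)).degree v = 2 * (d * m) := by
      rw [Fintype.sum_sum_type]
      have hl : ∀ a : Fin d, (completeBipartiteGraph (Fin d) (Fin m)).degree (Sum.inl a) = m := by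
        intro a
        rw [SimpleGraph.degree]
        have : (completeBipartiteGraph (Fin d) (Fin m)).neighborFinset (Sum.inl a)
            = (univ : Finset (Fin m)).image Sum.inr := by
          ext u
          simp only [SimpleGraph.mem_neighborFinset, completeBipartiteGraph_adj, mem_image,
            mem_univ, true_and]
          cases u <;> simp
        rw [this, Finset.card_image_of_injective _ Sum.inr_injective]; simp
      have hr : ∀ b : Fin m, (completeBipartiteGraph (Fin d) (Fin m)).degree (Sum.inr b) = d := by
        intro b
        rw [SimpleGraph.degree]
        have : (completeBipartiteGraph (Fin d) (Fin m)).neighborFinset (Sum.inr b)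
            = (univ : Finset (Fin d)).image Sum.inl := by
          ext u
          simp only [SimpleGraph.mem_neighborFinset, completeBipartiteGraph_adj, mem_image,
            mem_univ, true_and]
          cases u <;> simp
        rw [this, Finset.card_image_of_injective _ Sum.inl_injective]; simp
      simp only [hl, hr, Finset.sum_const, card_univ, Fintype.card_fin, smul_eq_mul]
      ring
    have := (completeBipartiteGraph (Fin d) (Fin m)).sum_degrees_eq_twice_card_edges
    omega
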